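/- For t ∈ ℤ, t' = 2t+1, and integers a, L with 1 ≤ a ≤ t and L ≥ 0, the combination Y^{0;t}_{a,t}(L) + q^{L+1−a+t} Y^{1;t}_{a,t+1}(L) equals zero, where Y^{n;t}_{a,b}(L) = Σ_{λ∈ℤ} ( q^{λ²tt' + λ(t'b − 2ta)} T(n, a−b−t'λ, L) − q^{(λt+b)(λt'+2a)} T(n, −a−b−t'λ, L) ). -/

import Mathlib

/-!
Split `Y^{n;t}_{a,b}` into its positive terms, involving `T(n, a-b-t'λ, L)`, and its negative
terms, involving `T(n, -a-b-t'λ, L)`. By the symmetry `T(n,-d,L) = q^{-nd} T(n,d,L)`, the positive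
terms of `Y^{0;t}_{a,t} + q^{L+1-a+t} Y^{1;t}_{a,t+1}` at `λ` and its negative terms at `-1-λ` are
`q^E` times the two sides of the `n = 0` recurrence
`T(0,d+1,L) + q^{L-d} T(1,d,L) = q^L T(1,d+1,L) + T(0,d,L)`, where `d = a-t-1-t'λ`.
All bilateral sums have finite support, so reindexing by `λ ↦ -1-λ` makes the combination vanish.
The recurrence itself holds because its summands telescope.
-/

/- `qq` plays the role of the formal variable `q`, as an element of the
field of rational functions over `ℚ`. -/
noncomputable def qq : RatFunc ℚ := RatFunc.X

/-- `(q)_n = ∏_{i=1}^n (1 - q^i)`. -/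
noncomputable def qp (n : ℕ) : RatFunc ℚ := ∏ i ∈ Finset.range n, (1 - qq ^ (i + 1))

/-- `(q)_n` for an integer index, declared to be `0` for negative `n`
(so that terms with a negative factorial index vanish upon division). -/
noncomputable def qpz (n : ℤ) : RatFunc ℚ := if 0 ≤ n then qp n.toNat else 0

/-- The Andrews–Baxter `q`-trinomial coefficient
`T(n,d,L) = Σ_k q^{k(k+d-n)} (q)_L / ((q)_k (q)_{k+d} (q)_{L-2k-d})`,
where terms with a negative factorial index are zero.  (Any term with a
nonzero contribution has `k ≤ L`, so the range below suffices.) -/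
noncomputable def qT (n d : ℤ) (L : ℕ) : RatFunc ℚ :=
  ∑ k ∈ Finset.range (L + 1),
    qq ^ ((k : ℤ) * ((k : ℤ) + d - n)) * qp L /
      (qp k * qpz ((k : ℤ) + d) * qpz ((L : ℤ) - 2 * k - d))

/-- `Y^{n;t}_{a,b}(L)` for `t = s/2 ∈ (1/2)ℤ` and `t' = 2t+1 = s+1`:
`Y = Σ_{λ∈ℤ} ( q^{λ²tt' + λ(t'b − 2ta)} T(n, a−b−t'λ, L)
             − q^{(λt+b)(λt'+2a)} T(n, −a−b−t'λ, L) )`.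
All exponents are integers (written in expanded form below, using that
`s(s+1)/2 ∈ ℤ`), and the bilateral sum has finite support since
`T(n,d,L) = 0` for `|d| > L`; it is rendered by `finsum`. -/
noncomputable def qY (s n a b : ℤ) (L : ℕ) : RatFunc ℚ :=
  ∑ᶠ l : ℤ,
    (qq ^ (l ^ 2 * (s * (s + 1) / 2) + l * ((s + 1) * b - s * a)) *
        qT n (a - b - (s + 1) * l) L -
      qq ^ (l ^ 2 * (s * (s + 1) / 2) + l * s * a + l * (s + 1) * b + 2 * a * b) *
        qT n (-a - b - (s + 1) * l) L)

open Finset Function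

lemma finsum_comp_equiv_sub_self {α M : Type*} [AddCommGroup M] {f : α → M}
    (hf : HasFiniteSupport f) (e : α ≃ α) : ∑ᶠ i, (f (e i) - f i) = 0 := by
  rw [finsum_sub_distrib (hf.fun_comp_of_injective e.injective) hf, finsum_comp_equiv, sub_self]

lemma qq_ne_zero : qq ≠ 0 := RatFunc.X_ne_zero

lemma one_sub_qq_pow_ne_zero (n : ℕ) : 1 - qq ^ (n + 1) ≠ 0 := by
  have h : 1 - qq ^ (n + 1) =
      algebraMap (Polynomial ℚ) (RatFunc ℚ) (1 - Polynomial.X ^ (n + 1)) := by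
    simp [qq]
  rw [h, Ne, map_eq_zero_iff _ (RatFunc.algebraMap_injective ℚ)]
  intro h0
  simpa using congrArg (Polynomial.eval 0) h0

lemma qp_succ (n : ℕ) : qp (n + 1) = qp n * (1 - qq ^ (n + 1)) := prod_range_succ _ n

lemma qpz_of_neg {n : ℤ} (h : n < 0) : qpz n = 0 := if_neg (by omega)

lemma qpz_natCast (n : ℕ) : qpz n = qp n := by simp [qpz]

/-- Since `(qpz n)⁻¹ = 0` for `n < 0`, this holds for every `n : ℤ`; it lets the trinomial
recurrence be checked summand by summand without case analysis. -/
lemma inv_qpz_sub_one (n : ℤ) : (qpz (n - 1))⁻¹ = (1 - qq ^ n) * (qpz n)⁻¹ := by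
  rcases lt_trichotomy n 0 with h | rfl | h
  · simp [qpz_of_neg h, qpz_of_neg (show n - 1 < 0 by omega)]
  · simp [qpz_of_neg (show (-1 : ℤ) < 0 by norm_num)]
  · obtain ⟨N, rfl⟩ : ∃ N : ℕ, n = N + 1 := ⟨n.toNat - 1, by omega⟩
    rw [add_sub_cancel_right, ← Nat.cast_add_one, qpz_natCast, qpz_natCast, qp_succ, zpow_natCast,
      mul_inv, mul_left_comm, mul_inv_cancel₀ (one_sub_qq_pow_ne_zero N), mul_one]

/-- `(q)_L / ((q)_i (q)_j (q)_m)`, which is `0` as soon as one of `i, j, m` is negative. -/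
noncomputable def qMultinomial (L : ℕ) (i j m : ℤ) : RatFunc ℚ :=
  qp L * (qpz i)⁻¹ * (qpz j)⁻¹ * (qpz m)⁻¹

lemma qMultinomial_eq_zero {L : ℕ} {i j m : ℤ} (h : i < 0 ∨ j < 0 ∨ m < 0) :
    qMultinomial L i j m = 0 := by
  rcases h with h | h | h <;> simp [qMultinomial, qpz_of_neg h]

noncomputable def trinomialSummand (n d : ℤ) (L : ℕ) (k : ℤ) : RatFunc ℚ :=
  qq ^ (k * (k + d - n)) * qMultinomial L k (k + d) (L - 2 * k - d)

lemma qT_eq_sum_trinomialSummand (n d : ℤ) (L : ℕ) :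
    qT n d L = ∑ k ∈ range (L + 1), trinomialSummand n d L k := by
  refine sum_congr rfl fun k _ => ?_
  rw [trinomialSummand, qMultinomial, qpz_natCast, div_eq_mul_inv, mul_inv, mul_inv]
  ring

lemma nonneg_of_trinomialSummand_ne_zero {n d : ℤ} {L : ℕ} {k : ℤ}
    (h : trinomialSummand n d L k ≠ 0) : 0 ≤ k ∧ 0 ≤ k + d ∧ 0 ≤ L - 2 * k - d := by
  by_contra hneg
  exact h (mul_eq_zero_of_right _ (qMultinomial_eq_zero (by omega)))

lemma support_trinomialSummand_subset (n d : ℤ) (L : ℕ) :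
    support (trinomialSummand n d L) ⊆ Set.Icc 0 (L : ℤ) := fun k hk => by
  have := nonneg_of_trinomialSummand_ne_zero hk
  exact ⟨this.1, by omega⟩

lemma qT_eq_finsum_trinomialSummand (n d : ℤ) (L : ℕ) :
    qT n d L = ∑ᶠ k : ℤ, trinomialSummand n d L k := by
  rw [qT_eq_sum_trinomialSummand, finsum_eq_sum_of_support_subset _
    (s := (range (L + 1)).map Nat.castEmbedding), sum_map]
  · rfl
  refine (support_trinomialSummand_subset n d L).trans fun k ⟨hk0, hkL⟩ => ?_
  simp only [coe_map, Set.mem_image, coe_range, Set.mem_Iio, Nat.castEmbedding_apply]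
  exact ⟨k.toNat, by omega, by omega⟩

lemma qT_eq_zero_of_lt_abs {n d : ℤ} {L : ℕ} (h : (L : ℤ) < |d|) : qT n d L = 0 := by
  rw [qT_eq_sum_trinomialSummand]
  refine sum_eq_zero fun k _ => ?_
  by_contra hk
  have := nonneg_of_trinomialSummand_ne_zero hk
  rw [lt_abs] at h
  omega

lemma trinomialSummand_neg_add (n d : ℤ) (L : ℕ) (k : ℤ) :
    trinomialSummand n (-d) L (k + d) = qq ^ (-(n * d)) * trinomialSummand n d L k := by
  simp only [trinomialSummand, qMultinomial]
  rw [show (k + d) * (k + d + -d - n) = -(n * d) + k * (k + d - n) by ring,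
    zpow_add₀ qq_ne_zero, show k + d + -d = k by ring,
    show (L : ℤ) - 2 * (k + d) - -d = L - 2 * k - d by ring]
  ring

lemma qT_neg (n d : ℤ) (L : ℕ) : qT n (-d) L = qq ^ (-(n * d)) * qT n d L := by
  rw [qT_eq_finsum_trinomialSummand, qT_eq_finsum_trinomialSummand, mul_finsum,
    ← finsum_comp_equiv (Equiv.addRight d)]
  exact finsum_congr (trinomialSummand_neg_add n d L)

noncomputable def trinomialTelescope (d : ℤ) (L : ℕ) (k : ℤ) : RatFunc ℚ :=
  qq ^ (k * (k + d)) * qMultinomial L (k - 1) (k + d) (L - 2 * k - d)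

lemma trinomialSummand_recurrence (d : ℤ) (L : ℕ) (k : ℤ) :
    trinomialSummand 0 (d + 1) L k + qq ^ ((L : ℤ) - d) * trinomialSummand 1 d L k
        - qq ^ (L : ℤ) * trinomialSummand 1 (d + 1) L k - trinomialSummand 0 d L k
      = trinomialTelescope d L (k + 1) - trinomialTelescope d L k := by
  -- Rewritten through `x = q^k`, `y = q^(k+d+1)`, `w = q^(L-2k-d-1)` and the multinomial with
  -- indices `(k, k+d+1, L-2k-d)`, this becomes a polynomial identity in `q, x, y, w`.
  have he : (qpz (k + d))⁻¹ = (1 - qq ^ (k + d + 1)) * (qpz (k + d + 1))⁻¹ := by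
    rw [← inv_qpz_sub_one, add_sub_cancel_right]
  have ex₁ : qq ^ (k * (k + (d + 1))) = qq ^ (k * (k + d)) * qq ^ k := by
    rw [← zpow_add₀ qq_ne_zero]; ring_nf
  have ex₂ : qq ^ ((L : ℤ) - d) * qq ^ (k * (k + d - 1)) =
      qq ^ (k * (k + d)) * qq ^ k * qq * qq ^ ((L : ℤ) - 2 * k - d - 1) := by
    simp only [← zpow_add_one₀ qq_ne_zero, ← zpow_add₀ qq_ne_zero]; ring_nf
  have ex₃ : qq ^ (L : ℤ) * qq ^ (k * (k + (d + 1) - 1)) =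
      qq ^ (k * (k + d)) * qq ^ k * qq ^ (k + d + 1) * qq ^ ((L : ℤ) - 2 * k - d - 1) := by
    simp only [← zpow_add₀ qq_ne_zero]; ring_nf
  have ex₄ : qq ^ ((k + 1) * (k + 1 + d)) = qq ^ (k * (k + d)) * qq ^ k * qq ^ (k + d + 1) := by
    simp only [← zpow_add₀ qq_ne_zero]; ring_nf
  have ex₅ : qq ^ ((L : ℤ) - 2 * k - d) = qq * qq ^ ((L : ℤ) - 2 * k - d - 1) := by
    rw [← zpow_one_add₀ qq_ne_zero]; ring_nf
  simp only [trinomialSummand, trinomialTelescope, qMultinomial, sub_zero]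
  rw [ex₁, ex₄, ← mul_assoc _ (qq ^ (k * (k + d - 1))),
    ← mul_assoc _ (qq ^ (k * (k + (d + 1) - 1))), ex₂, ex₃,
    show k + (d + 1) = k + d + 1 by ring, show k + 1 - 1 = k by ring,
    show k + 1 + d = k + d + 1 by ring,
    show (L : ℤ) - 2 * k - (d + 1) = L - 2 * k - d - 1 by ring,
    show (L : ℤ) - 2 * (k + 1) - d = L - 2 * k - d - 1 - 1 by ring,
    inv_qpz_sub_one ((L : ℤ) - 2 * k - d - 1), inv_qpz_sub_one ((L : ℤ) - 2 * k - d),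
    inv_qpz_sub_one k, he, ex₅]
  ring

lemma qT_zero_recurrence (d : ℤ) (L : ℕ) :
    qT 0 (d + 1) L + qq ^ ((L : ℤ) - d) * qT 1 d L =
      qq ^ (L : ℤ) * qT 1 (d + 1) L + qT 0 d L := by
  have hG₀ : trinomialTelescope d L 0 = 0 :=
    mul_eq_zero_of_right _ (qMultinomial_eq_zero (by omega))
  have hG₁ : trinomialTelescope d L (L + 1) = 0 :=
    mul_eq_zero_of_right _ (qMultinomial_eq_zero (by omega))
  rw [← sub_eq_zero, sub_add_eq_sub_sub]
  simp only [qT_eq_sum_trinomialSummand, mul_sum, ← sum_add_distrib, ← sum_sub_distrib,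
    trinomialSummand_recurrence]
  simpa [hG₀, hG₁] using sum_range_sub (fun k : ℕ => trinomialTelescope d L k) (L + 1)

noncomputable def qYPosTerm (s n a b : ℤ) (L : ℕ) (l : ℤ) : RatFunc ℚ :=
  qq ^ (l ^ 2 * (s * (s + 1) / 2) + l * ((s + 1) * b - s * a)) * qT n (a - b - (s + 1) * l) L

noncomputable def qYNegTerm (s n a b : ℤ) (L : ℕ) (l : ℤ) : RatFunc ℚ :=
  qq ^ (l ^ 2 * (s * (s + 1) / 2) + l * s * a + l * (s + 1) * b + 2 * a * b) *
    qT n (-a - b - (s + 1) * l) L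

lemma qY_eq_finsum (s n a b : ℤ) (L : ℕ) :
    qY s n a b L = ∑ᶠ l, (qYPosTerm s n a b L l - qYNegTerm s n a b L l) := rfl

lemma hasFiniteSupport_zpow_mul_qT (E : ℤ → ℤ) (n c : ℤ) {m : ℤ} (hm : m ≠ 0) (L : ℕ) :
    HasFiniteSupport fun l => qq ^ E l * qT n (c - m * l) L := by
  refine (Set.finite_Icc (-(|c| + L)) (|c| + L)).subset fun l hl => ?_
  have hT : |c - m * l| ≤ L := not_lt.1 (mt qT_eq_zero_of_lt_abs (right_ne_zero_of_mul hl))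
  have hl : |l| ≤ |m * l| := by
    rw [abs_mul]; exact le_mul_of_one_le_left (abs_nonneg l) (Int.one_le_abs hm)
  rw [Set.mem_Icc, ← abs_le]
  linarith [abs_sub_abs_le_abs_sub (m * l) c, abs_sub_comm c (m * l)]

lemma hasFiniteSupport_qYPosTerm {s : ℤ} (hs : s + 1 ≠ 0) (n a b : ℤ) (L : ℕ) :
    HasFiniteSupport (qYPosTerm s n a b L) :=
  hasFiniteSupport_zpow_mul_qT _ n _ hs L

lemma hasFiniteSupport_qYNegTerm {s : ℤ} (hs : s + 1 ≠ 0) (n a b : ℤ) (L : ℕ) :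
    HasFiniteSupport (qYNegTerm s n a b L) :=
  hasFiniteSupport_zpow_mul_qT _ n _ hs L

lemma qYPosTerm_add_eq_qYNegTerm (t a : ℤ) (L : ℕ) (l : ℤ) :
    qYPosTerm (2 * t) 0 a t L l + qq ^ ((L : ℤ) + 1 - a + t) * qYPosTerm (2 * t) 1 a (t + 1) L l =
      qYNegTerm (2 * t) 0 a t L (-1 - l) +
        qq ^ ((L : ℤ) + 1 - a + t) * qYNegTerm (2 * t) 1 a (t + 1) L (-1 - l) := by
  have hs : 2 * t * (2 * t + 1) / 2 = t * (2 * t + 1) := by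
    rw [mul_assoc]; exact Int.mul_ediv_cancel_left _ two_ne_zero
  set d := a - t - 1 - (2 * t + 1) * l
  have hrec := congrArg (qq ^ (l ^ 2 * (t * (2 * t + 1)) + l * ((2 * t + 1) * t - 2 * t * a)) * ·)
    (qT_zero_recurrence d L)
  simp only [mul_add, ← mul_assoc, ← zpow_add₀ qq_ne_zero] at hrec
  simp only [qYPosTerm, qYNegTerm, hs]
  rw [show a - t - (2 * t + 1) * l = d + 1 by ring, show a - (t + 1) - (2 * t + 1) * l = d by ring,
    show -a - t - (2 * t + 1) * (-1 - l) = -d by ring,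
    show -a - (t + 1) - (2 * t + 1) * (-1 - l) = -(d + 1) by ring, qT_neg, qT_neg]
  simp only [← mul_assoc, ← zpow_add₀ qq_ne_zero]
  simp only [d] at hrec ⊢
  linear_combination (norm := ring_nf) hrec

theorem qY_top_boundary_integer_general (t a : ℤ) (L : ℕ) :
    qY (2 * t) 0 a t L + qq ^ ((L : ℤ) + 1 - a + t) * qY (2 * t) 1 a (t + 1) L = 0 := by
  have hs : 2 * t + 1 ≠ 0 := by omega
  have hP := hasFiniteSupport_qYPosTerm hs
  have hN := hasFiniteSupport_qYNegTerm hs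
  let B l := qYNegTerm (2 * t) 0 a t L l +
    qq ^ ((L : ℤ) + 1 - a + t) * qYNegTerm (2 * t) 1 a (t + 1) L l
  calc _ = ∑ᶠ l, (B (Equiv.subLeft (-1) l) - B l) := by
        rw [qY_eq_finsum, qY_eq_finsum, mul_finsum,
          ← finsum_add_distrib (by fun_prop) (by fun_prop)]
        refine finsum_congr fun l => ?_
        simp only [B, Equiv.subLeft_apply]
        linear_combination qYPosTerm_add_eq_qYNegTerm t a L l
    _ = 0 := finsum_comp_equiv_sub_self (by fun_prop) _

/-- For `t ∈ ℤ` (so `s = 2t`) and `1 ≤ a ≤ t`, `L ≥ 0`: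
`Y^{0;t}_{a,t}(L) + q^{L+1−a+t} Y^{1;t}_{a,t+1}(L) = 0`. -/
theorem qY_top_boundary_integer (t a : ℤ) (L : ℕ) (ha1 : 1 ≤ a) (ha2 : a ≤ t) :
    qY (2 * t) 0 a t L + qq ^ ((L : ℤ) + 1 - a + t) * qY (2 * t) 1 a (t + 1) L = 0 :=
  qY_top_boundary_integer_general t a L
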